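/- arXiv:2509.09434 — 2 statements merged into one kernel-verified Lean document; each statement's English description precedes it below -/
import Mathlib

section
/- Row-masking by a general index set decomposes as a sum of Kronecker rank-one terms over a cuboid partition: if the set of kept row-indices K ⊆ {1,...,m₁}×{1,...,m₂}×{1,...,m₃} is partitioned into Cartesian-product blocks K = ⊎_{s=1}^N K₁^s × K₂^s × K₃^s, then the row-masked Kronecker product satisfies Mask_K(C^(1) ⊗ C^(2) ⊗ C^(3)) = ∑_{s=1}^N (P₁^s C^(1)) ⊗ (P₂^s C^(2)) ⊗ (P₃^s C^(3)), where P_d^s is the diagonal 0/1 projector onto K_d^s. -/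
/-- Row-masking by a general kept index set `K`, partitioned into `N`
pairwise-disjoint Cartesian-product blocks `K₁ˢ × K₂ˢ × K₃ˢ`, decomposes the
masked Kronecker product into a sum of `N` Kronecker rank-one terms
`(P₁ˢC^(1)) ⊗ (P₂ˢC^(2)) ⊗ (P₃ˢC^(3))` with `P_dˢ` the diagonal 0/1 projector
onto `K_dˢ`. -/
theorem masked_kronecker_partition_sum
    (m n : Fin 3 → ℕ)
    (C : ∀ d, Matrix (Fin (m d)) (Fin (n d)) ℝ)
    (K : Finset (∀ d, Fin (m d)))
    (N : ℕ) (Kb : Fin N → ∀ d, Finset (Fin (m d)))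
    (hcover : ∀ i : ∀ d, Fin (m d), i ∈ K ↔ ∃ s, ∀ d, i d ∈ Kb s d)
    (hdisj : ∀ s t, s ≠ t → ∀ i : ∀ d, Fin (m d),
      (∀ d, i d ∈ Kb s d) → (∀ d, i d ∈ Kb t d) → False) :
    ∀ (i : ∀ d, Fin (m d)) (j : ∀ d, Fin (n d)),
      (if i ∈ K then ∏ d, C d (i d) (j d) else 0)
        = ∑ s, ∏ d, (Matrix.diagonal (fun a => if a ∈ Kb s d then (1:ℝ) else 0)
            * C d) (i d) (j d) := by
  intro i j
  have hterm : ∀ s, (∏ d, (Matrix.diagonal (fun a => if a ∈ Kb s d then (1:ℝ) else 0)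
      * C d) (i d) (j d))
      = (if ∀ d, i d ∈ Kb s d then (1:ℝ) else 0) * ∏ d, C d (i d) (j d) := by
    intro s
    have : ∀ d, (Matrix.diagonal (fun a => if a ∈ Kb s d then (1:ℝ) else 0)
        * C d) (i d) (j d) = (if i d ∈ Kb s d then (1:ℝ) else 0) * C d (i d) (j d) := by
      intro d
      rw [Matrix.diagonal_mul]
    simp_rw [this]
    rw [Finset.prod_mul_distrib, Finset.prod_boole]
    simp
  simp_rw [hterm]
  by_cases hK : i ∈ K
  · obtain ⟨s, hs⟩ := (hcover i).mp hK
    rw [if_pos hK, Finset.sum_eq_single s]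
    · rw [if_pos hs, one_mul]
    · intro t _ hts
      rw [if_neg (fun ht => hdisj t s hts i ht hs), zero_mul]
    · intro h; exact absurd (Finset.mem_univ s) h
  · rw [if_neg hK]
    refine (Finset.sum_eq_zero ?_).symm
    intro s _
    rw [if_neg (fun hs => hK ((hcover i).mpr ⟨s, hs⟩)), zero_mul]
end

section
/- The complementary masking identity: with notation as above and the complement K^c of K in the full row-index grid also partitioned into Cartesian blocks ⊎_{s=1}^M L₁^s × L₂^s × L₃^s, one has Mask_K(C^(1) ⊗ C^(2) ⊗ C^(3)) = C^(1) ⊗ C^(2) ⊗ C^(3) − ∑_{s=1}^M (Q₁^s C^(1)) ⊗ (Q₂^s C^(2)) ⊗ (Q₃^s C^(3)), where Q_d^s projects onto L_d^s. Hence the number of Kronecker summands needed is at most min(N, M+1) where N, M are the cuboid counts of K and K^c. -/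
/-- Complementary masking identity: if the complement of the kept row-index
set `K` is partitioned into `M` pairwise-disjoint Cartesian blocks
`L₁ˢ × L₂ˢ × L₃ˢ`, then the row-masked Kronecker product equals the full
Kronecker product minus the sum of the `M` Kronecker terms obtained by
projecting each factor onto `L_dˢ`. -/
theorem masked_kronecker_complement
    (m n : Fin 3 → ℕ)
    (C : ∀ d, Matrix (Fin (m d)) (Fin (n d)) ℝ)
    (K : Finset (∀ d, Fin (m d)))
    (M : ℕ) (Lb : Fin M → ∀ d, Finset (Fin (m d)))
    (hcover : ∀ i : ∀ d, Fin (m d), i ∉ K ↔ ∃ s, ∀ d, i d ∈ Lb s d)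
    (hdisj : ∀ s t, s ≠ t → ∀ i : ∀ d, Fin (m d),
      (∀ d, i d ∈ Lb s d) → (∀ d, i d ∈ Lb t d) → False) :
    ∀ (i : ∀ d, Fin (m d)) (j : ∀ d, Fin (n d)),
      (if i ∈ K then ∏ d, C d (i d) (j d) else 0)
        = ∏ d, C d (i d) (j d)
          - ∑ s, ∏ d, (Matrix.diagonal
              (fun a => if a ∈ Lb s d then (1:ℝ) else 0) * C d) (i d) (j d) := by
  intro i j
  have hterm : ∀ s : Fin M,
      (∏ d, (Matrix.diagonal (fun a => if a ∈ Lb s d then (1:ℝ) else 0) * C d) (i d) (j d))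
        = (if ∀ d, i d ∈ Lb s d then (1:ℝ) else 0) * ∏ d, C d (i d) (j d) := by
    intro s
    rw [show (∏ d, (Matrix.diagonal (fun a => if a ∈ Lb s d then (1:ℝ) else 0) * C d) (i d) (j d))
        = ∏ d, ((if i d ∈ Lb s d then (1:ℝ) else 0) * C d (i d) (j d)) from by
      apply Finset.prod_congr rfl; intro d _; rw [Matrix.diagonal_mul]]
    rw [Finset.prod_mul_distrib, Finset.prod_boole]
    simp
  simp only [hterm]
  by_cases hK : i ∈ K
  · have hnone : ∀ s : Fin M, ¬ ∀ d, i d ∈ Lb s d := by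
      intro s hs
      exact (not_not.mpr hK) ((hcover i).mpr ⟨s, hs⟩)
    simp [hK, hnone]
  · obtain ⟨s₀, hs₀⟩ := (hcover i).mp hK
    have : (∑ s : Fin M, (if ∀ d, i d ∈ Lb s d then (1:ℝ) else 0) * ∏ d, C d (i d) (j d))
        = ∏ d, C d (i d) (j d) := by
      rw [Finset.sum_eq_single s₀]
      · simp [hs₀]
      · intro t _ ht
        have : ¬ ∀ d, i d ∈ Lb t d := fun h => hdisj t s₀ ht i h hs₀
        simp [this]
      · simp
    rw [this]
    simp [hK]
end
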